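/- arXiv:2412.00839 — 3 statements merged into one kernel-verified Lean document; each statement's English description precedes it below -/
import Mathlib

section
/- Let m and n be odd integers greater than 1, and let N be an integer with N ≥ 2mn. Then in the symmetric group of permutations of Fin N, q_{ι_{mn}}(ι_n) = 3: the permutation ι_n is a product of three permutations each conjugate to ι_{mn}, and ι_n is not a product of fewer than three elements each conjugate to ι_{mn} or to ι_{mn}⁻¹. -/
set_option maxHeartbeats 1000000

/-- `iotaFin n k` is the permutation `(1,2)(3,4)⋯(2k−1,2k)` of `Fin n`. -/
def iotaFin (n k : ℕ) : Equiv.Perm (Fin n) :=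
  ((List.range k).map fun i =>
    if h : 2 * i + 1 < n then
      Equiv.swap (⟨2 * i, by omega⟩ : Fin n) ⟨2 * i + 1, h⟩
    else 1).prod

/-- `qnorm x g` is the least number `n` such that `g` is a product of `n` elements,
each conjugate to `x` or to `x⁻¹`. -/
noncomputable def qnorm {G : Type*} [Group G] (x g : G) : ℕ :=
  sInf {n | ∃ L : List G, L.length = n ∧ (∀ y ∈ L, IsConj x y ∨ IsConj x⁻¹ y) ∧ L.prod = g}

/-- value function of `swapSeq` -/
def fseq (s a b K v : ℕ) : ℕ :=
  if s ≤ v ∧ v < s + 4 * K ∧ (v - s) % 4 = a then v + (b - a)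
  else if s ≤ v ∧ v < s + 4 * K ∧ (v - s) % 4 = b then v - (b - a) else v

/-- value function of `iotaFin` -/
def fio (k v : ℕ) : ℕ := if v < 2 * k then (if v % 2 = 0 then v + 1 else v - 1) else v

lemma fseq_spec (s a b K v : ℕ) :
    (s ≤ v ∧ v < s + 4 * K ∧ (v - s) % 4 = a ∧ fseq s a b K v = v + (b - a)) ∨
    ((v - s) % 4 ≠ a ∧ s ≤ v ∧ v < s + 4 * K ∧ (v - s) % 4 = b ∧
      fseq s a b K v = v - (b - a)) ∨
    (fseq s a b K v = v ∧ (v < s ∨ s + 4 * K ≤ v ∨ ((v - s) % 4 ≠ a ∧ (v - s) % 4 ≠ b))) := by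
  unfold fseq; split_ifs <;> omega

lemma fio_spec (k v : ℕ) :
    (v < 2 * k ∧ v % 2 = 0 ∧ fio k v = v + 1) ∨
    (v < 2 * k ∧ v % 2 = 1 ∧ fio k v = v - 1) ∨
    (2 * k ≤ v ∧ fio k v = v) := by
  unfold fio; split_ifs <;> omega

/-- Auxiliary: product of swaps `(s+4j+a, s+4j+b)` for `j < K`. -/
def swapSeq (N s a b K : ℕ) : Equiv.Perm (Fin N) :=
  ((List.range K).map fun j =>
    if h : s + 4 * j + b < N ∧ a < b then
      Equiv.swap (⟨s + 4 * j + a, by omega⟩ : Fin N) ⟨s + 4 * j + b, h.1⟩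
    else 1).prod

lemma swapSeq_succ (N s a b K : ℕ) : swapSeq N s a b (K + 1) = swapSeq N s a b K *
    (if h : s + 4 * K + b < N ∧ a < b then
      Equiv.swap (⟨s + 4 * K + a, by omega⟩ : Fin N) ⟨s + 4 * K + b, h.1⟩
    else 1) := by
  simp [swapSeq, List.range_succ]

lemma swapSeq_apply (N s a b K : ℕ) (hab : a < b) (hb : b < 4) (hK : s + 4 * K ≤ N)
    (x : Fin N) : ((swapSeq N s a b K) x).val = fseq s a b K x.val := by
  induction K generalizing x with
  | zero =>
    simp only [swapSeq, List.range_zero, List.map_nil, List.prod_nil, Equiv.Perm.one_apply]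
    have := fseq_spec s a b 0 x.val
    omega
  | succ K ih =>
    rw [swapSeq_succ, dif_pos ⟨by omega, hab⟩, Equiv.Perm.mul_apply]
    rcases eq_or_ne x ⟨s + 4 * K + a, by omega⟩ with h1 | h1
    · rw [h1, Equiv.swap_apply_left, ih (by omega)]
      simp only [Fin.val_mk]
      have := fseq_spec s a b K (s + 4 * K + b)
      have := fseq_spec s a b (K + 1) (s + 4 * K + a)
      omega
    · rcases eq_or_ne x ⟨s + 4 * K + b, by omega⟩ with h2 | h2
      · rw [h2, Equiv.swap_apply_right, ih (by omega)]
        simp only [Fin.val_mk]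
        have := fseq_spec s a b K (s + 4 * K + a)
        have := fseq_spec s a b (K + 1) (s + 4 * K + b)
        omega
      · rw [Equiv.swap_apply_of_ne_of_ne h1 h2, ih (by omega)]
        have hx1 : x.val ≠ s + 4 * K + a := fun h => h1 (Fin.ext h)
        have hx2 : x.val ≠ s + 4 * K + b := fun h => h2 (Fin.ext h)
        have := fseq_spec s a b K x.val
        have := fseq_spec s a b (K + 1) x.val
        omega

lemma iotaFin_succ (N k : ℕ) : iotaFin N (k + 1) = iotaFin N k *
    (if h : 2 * k + 1 < N then
      Equiv.swap (⟨2 * k, by omega⟩ : Fin N) ⟨2 * k + 1, h⟩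
    else 1) := by
  simp [iotaFin, List.range_succ]

lemma iotaFin_apply (N k : ℕ) (hk : 2 * k ≤ N) (x : Fin N) :
    ((iotaFin N k) x).val = fio k x.val := by
  induction k generalizing x with
  | zero =>
    simp only [iotaFin, List.range_zero, List.map_nil, List.prod_nil, Equiv.Perm.one_apply]
    have := fio_spec 0 x.val
    omega
  | succ k ih =>
    rw [iotaFin_succ, dif_pos (by omega : 2 * k + 1 < N), Equiv.Perm.mul_apply]
    rcases eq_or_ne x ⟨2 * k, by omega⟩ with h1 | h1
    · rw [h1, Equiv.swap_apply_left, ih (by omega)]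
      simp only [Fin.val_mk]
      have := fio_spec k (2 * k + 1)
      have := fio_spec (k + 1) (2 * k)
      omega
    · rcases eq_or_ne x ⟨2 * k + 1, by omega⟩ with h2 | h2
      · rw [h2, Equiv.swap_apply_right, ih (by omega)]
        simp only [Fin.val_mk]
        have := fio_spec k (2 * k)
        have := fio_spec (k + 1) (2 * k + 1)
        omega
      · rw [Equiv.swap_apply_of_ne_of_ne h1 h2, ih (by omega)]
        have hx1 : x.val ≠ 2 * k := fun h => h1 (Fin.ext h)
        have hx2 : x.val ≠ 2 * k + 1 := fun h => h2 (Fin.ext h)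
        have := fio_spec k x.val
        have := fio_spec (k + 1) x.val
        omega

attribute [irreducible] fseq fio

lemma iotaFin_sign (N k : ℕ) (hk : 2 * k ≤ N) :
    Equiv.Perm.sign (iotaFin N k) = (-1) ^ k := by
  induction k with
  | zero => simp [iotaFin]
  | succ k ih =>
    rw [iotaFin_succ, dif_pos (by omega : 2 * k + 1 < N), map_mul, ih (by omega),
      Equiv.Perm.sign_swap (by simp [Fin.ext_iff])]
    rw [pow_succ]

lemma iotaFin_card_support (N k : ℕ) (hk : 2 * k ≤ N) :
    (iotaFin N k).support.card = 2 * k := by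
  have h : (iotaFin N k).support =
      (Finset.range (2 * k)).attachFin
        (fun m hm => lt_of_lt_of_le (Finset.mem_range.mp hm) hk) := by
    ext x
    rw [Equiv.Perm.mem_support, Finset.mem_attachFin, Finset.mem_range, Ne, Fin.ext_iff,
      iotaFin_apply N k hk]
    have := fio_spec k x.val
    omega
  rw [h, Finset.card_attachFin, Finset.card_range]

lemma sign_eq_of_isConj {N : ℕ} {a b : Equiv.Perm (Fin N)} (h : IsConj a b) :
    Equiv.Perm.sign a = Equiv.Perm.sign b := by
  obtain ⟨c, hc⟩ := isConj_iff.mp h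
  rw [← hc, map_mul, map_mul, map_inv, mul_comm, inv_mul_cancel_left]

lemma card_support_eq_of_isConj {N : ℕ} {a b : Equiv.Perm (Fin N)} (h : IsConj a b) :
    a.support.card = b.support.card := by
  obtain ⟨c, hc⟩ := isConj_iff.mp h
  rw [← hc, Equiv.Perm.card_support_conj]

lemma reg0 (m n t v : ℕ) (hn1 : 1 < n) (hmn : 2 * n ≤ 2 * (m * n)) (h4K : 2 * n + 4 * (t * n) = 2 * (m * n)) (h : v < 2*n ∧ v % 2 = 0) :
    fio n v = fio (m*n) (fseq (2*n) 1 2 (t*n) (fio (m*n) (fseq (2*n) 1 2 (t*n) (fseq (2*n) 1 3 (t*n) (fseq (2*n) 2 3 (t*n) (fio (m*n) (fseq (2*n) 2 3 (t*n) (fseq (2*n) 1 3 (t*n) (v))))))))) := by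
  have s1 := fseq_spec (2*n) 1 3 (t*n) (v)
  have e1 : fseq (2*n) 1 3 (t*n) (v) = v := by omega
  rw [e1]
  clear s1 e1
  have s2 := fseq_spec (2*n) 2 3 (t*n) (v)
  have e2 : fseq (2*n) 2 3 (t*n) (v) = v := by omega
  rw [e2]
  clear s2 e2
  have s3 := fio_spec (m*n) (v)
  have e3 : fio (m*n) (v) = v+1 := by omega
  rw [e3]
  clear s3 e3
  have s4 := fseq_spec (2*n) 2 3 (t*n) (v+1)
  have e4 : fseq (2*n) 2 3 (t*n) (v+1) = v+1 := by omega
  rw [e4]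
  clear s4 e4
  have s5 := fseq_spec (2*n) 1 3 (t*n) (v+1)
  have e5 : fseq (2*n) 1 3 (t*n) (v+1) = v+1 := by omega
  rw [e5]
  clear s5 e5
  have s6 := fseq_spec (2*n) 1 2 (t*n) (v+1)
  have e6 : fseq (2*n) 1 2 (t*n) (v+1) = v+1 := by omega
  rw [e6]
  clear s6 e6
  have s7 := fio_spec (m*n) (v+1)
  have e7 : fio (m*n) (v+1) = v := by omega
  rw [e7]
  clear s7 e7
  have s8 := fseq_spec (2*n) 1 2 (t*n) (v)
  have e8 : fseq (2*n) 1 2 (t*n) (v) = v := by omega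
  rw [e8]
  clear s8 e8
  have s9 := fio_spec (m*n) (v)
  have s0 := fio_spec n v
  omega

lemma reg1 (m n t v : ℕ) (hn1 : 1 < n) (hmn : 2 * n ≤ 2 * (m * n)) (h4K : 2 * n + 4 * (t * n) = 2 * (m * n)) (h : v < 2*n ∧ v % 2 = 1) :
    fio n v = fio (m*n) (fseq (2*n) 1 2 (t*n) (fio (m*n) (fseq (2*n) 1 2 (t*n) (fseq (2*n) 1 3 (t*n) (fseq (2*n) 2 3 (t*n) (fio (m*n) (fseq (2*n) 2 3 (t*n) (fseq (2*n) 1 3 (t*n) (v))))))))) := by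
  have s1 := fseq_spec (2*n) 1 3 (t*n) (v)
  have e1 : fseq (2*n) 1 3 (t*n) (v) = v := by omega
  rw [e1]
  clear s1 e1
  have s2 := fseq_spec (2*n) 2 3 (t*n) (v)
  have e2 : fseq (2*n) 2 3 (t*n) (v) = v := by omega
  rw [e2]
  clear s2 e2
  have s3 := fio_spec (m*n) (v)
  have e3 : fio (m*n) (v) = v-1 := by omega
  rw [e3]
  clear s3 e3
  have s4 := fseq_spec (2*n) 2 3 (t*n) (v-1)
  have e4 : fseq (2*n) 2 3 (t*n) (v-1) = v-1 := by omega
  rw [e4]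
  clear s4 e4
  have s5 := fseq_spec (2*n) 1 3 (t*n) (v-1)
  have e5 : fseq (2*n) 1 3 (t*n) (v-1) = v-1 := by omega
  rw [e5]
  clear s5 e5
  have s6 := fseq_spec (2*n) 1 2 (t*n) (v-1)
  have e6 : fseq (2*n) 1 2 (t*n) (v-1) = v-1 := by omega
  rw [e6]
  clear s6 e6
  have s7 := fio_spec (m*n) (v-1)
  have e7 : fio (m*n) (v-1) = v := by omega
  rw [e7]
  clear s7 e7
  have s8 := fseq_spec (2*n) 1 2 (t*n) (v)
  have e8 : fseq (2*n) 1 2 (t*n) (v) = v := by omega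
  rw [e8]
  clear s8 e8
  have s9 := fio_spec (m*n) (v)
  have s0 := fio_spec n v
  omega

lemma reg2 (m n t v : ℕ) (hn1 : 1 < n) (hmn : 2 * n ≤ 2 * (m * n)) (h4K : 2 * n + 4 * (t * n) = 2 * (m * n)) (h : 2*n ≤ v ∧ v < 2*(m*n) ∧ (v - 2*n) % 4 = 0) :
    fio n v = fio (m*n) (fseq (2*n) 1 2 (t*n) (fio (m*n) (fseq (2*n) 1 2 (t*n) (fseq (2*n) 1 3 (t*n) (fseq (2*n) 2 3 (t*n) (fio (m*n) (fseq (2*n) 2 3 (t*n) (fseq (2*n) 1 3 (t*n) (v))))))))) := by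
  have s1 := fseq_spec (2*n) 1 3 (t*n) (v)
  have e1 : fseq (2*n) 1 3 (t*n) (v) = v := by omega
  rw [e1]
  clear s1 e1
  have s2 := fseq_spec (2*n) 2 3 (t*n) (v)
  have e2 : fseq (2*n) 2 3 (t*n) (v) = v := by omega
  rw [e2]
  clear s2 e2
  have s3 := fio_spec (m*n) (v)
  have e3 : fio (m*n) (v) = v+1 := by omega
  rw [e3]
  clear s3 e3
  have s4 := fseq_spec (2*n) 2 3 (t*n) (v+1)
  have e4 : fseq (2*n) 2 3 (t*n) (v+1) = v+1 := by omega
  rw [e4]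
  clear s4 e4
  have s5 := fseq_spec (2*n) 1 3 (t*n) (v+1)
  have e5 : fseq (2*n) 1 3 (t*n) (v+1) = v+3 := by omega
  rw [e5]
  clear s5 e5
  have s6 := fseq_spec (2*n) 1 2 (t*n) (v+3)
  have e6 : fseq (2*n) 1 2 (t*n) (v+3) = v+3 := by omega
  rw [e6]
  clear s6 e6
  have s7 := fio_spec (m*n) (v+3)
  have e7 : fio (m*n) (v+3) = v+2 := by omega
  rw [e7]
  clear s7 e7
  have s8 := fseq_spec (2*n) 1 2 (t*n) (v+2)
  have e8 : fseq (2*n) 1 2 (t*n) (v+2) = v+1 := by omega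
  rw [e8]
  clear s8 e8
  have s9 := fio_spec (m*n) (v+1)
  have s0 := fio_spec n v
  omega

lemma reg3 (m n t v : ℕ) (hn1 : 1 < n) (hmn : 2 * n ≤ 2 * (m * n)) (h4K : 2 * n + 4 * (t * n) = 2 * (m * n)) (h : 2*n ≤ v ∧ v < 2*(m*n) ∧ (v - 2*n) % 4 = 1) :
    fio n v = fio (m*n) (fseq (2*n) 1 2 (t*n) (fio (m*n) (fseq (2*n) 1 2 (t*n) (fseq (2*n) 1 3 (t*n) (fseq (2*n) 2 3 (t*n) (fio (m*n) (fseq (2*n) 2 3 (t*n) (fseq (2*n) 1 3 (t*n) (v))))))))) := by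
  have s1 := fseq_spec (2*n) 1 3 (t*n) (v)
  have e1 : fseq (2*n) 1 3 (t*n) (v) = v+2 := by omega
  rw [e1]
  clear s1 e1
  have s2 := fseq_spec (2*n) 2 3 (t*n) (v+2)
  have e2 : fseq (2*n) 2 3 (t*n) (v+2) = v+1 := by omega
  rw [e2]
  clear s2 e2
  have s3 := fio_spec (m*n) (v+1)
  have e3 : fio (m*n) (v+1) = v+2 := by omega
  rw [e3]
  clear s3 e3
  have s4 := fseq_spec (2*n) 2 3 (t*n) (v+2)
  have e4 : fseq (2*n) 2 3 (t*n) (v+2) = v+1 := by omega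
  rw [e4]
  clear s4 e4
  have s5 := fseq_spec (2*n) 1 3 (t*n) (v+1)
  have e5 : fseq (2*n) 1 3 (t*n) (v+1) = v+1 := by omega
  rw [e5]
  clear s5 e5
  have s6 := fseq_spec (2*n) 1 2 (t*n) (v+1)
  have e6 : fseq (2*n) 1 2 (t*n) (v+1) = v := by omega
  rw [e6]
  clear s6 e6
  have s7 := fio_spec (m*n) (v)
  have e7 : fio (m*n) (v) = v-1 := by omega
  rw [e7]
  clear s7 e7
  have s8 := fseq_spec (2*n) 1 2 (t*n) (v-1)
  have e8 : fseq (2*n) 1 2 (t*n) (v-1) = v-1 := by omega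
  rw [e8]
  clear s8 e8
  have s9 := fio_spec (m*n) (v-1)
  have s0 := fio_spec n v
  omega

lemma reg4 (m n t v : ℕ) (hn1 : 1 < n) (hmn : 2 * n ≤ 2 * (m * n)) (h4K : 2 * n + 4 * (t * n) = 2 * (m * n)) (h : 2*n ≤ v ∧ v < 2*(m*n) ∧ (v - 2*n) % 4 = 2) :
    fio n v = fio (m*n) (fseq (2*n) 1 2 (t*n) (fio (m*n) (fseq (2*n) 1 2 (t*n) (fseq (2*n) 1 3 (t*n) (fseq (2*n) 2 3 (t*n) (fio (m*n) (fseq (2*n) 2 3 (t*n) (fseq (2*n) 1 3 (t*n) (v))))))))) := by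
  have s1 := fseq_spec (2*n) 1 3 (t*n) (v)
  have e1 : fseq (2*n) 1 3 (t*n) (v) = v := by omega
  rw [e1]
  clear s1 e1
  have s2 := fseq_spec (2*n) 2 3 (t*n) (v)
  have e2 : fseq (2*n) 2 3 (t*n) (v) = v+1 := by omega
  rw [e2]
  clear s2 e2
  have s3 := fio_spec (m*n) (v+1)
  have e3 : fio (m*n) (v+1) = v := by omega
  rw [e3]
  clear s3 e3
  have s4 := fseq_spec (2*n) 2 3 (t*n) (v)
  have e4 : fseq (2*n) 2 3 (t*n) (v) = v+1 := by omega
  rw [e4]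
  clear s4 e4
  have s5 := fseq_spec (2*n) 1 3 (t*n) (v+1)
  have e5 : fseq (2*n) 1 3 (t*n) (v+1) = v-1 := by omega
  rw [e5]
  clear s5 e5
  have s6 := fseq_spec (2*n) 1 2 (t*n) (v-1)
  have e6 : fseq (2*n) 1 2 (t*n) (v-1) = v := by omega
  rw [e6]
  clear s6 e6
  have s7 := fio_spec (m*n) (v)
  have e7 : fio (m*n) (v) = v+1 := by omega
  rw [e7]
  clear s7 e7
  have s8 := fseq_spec (2*n) 1 2 (t*n) (v+1)
  have e8 : fseq (2*n) 1 2 (t*n) (v+1) = v+1 := by omega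
  rw [e8]
  clear s8 e8
  have s9 := fio_spec (m*n) (v+1)
  have s0 := fio_spec n v
  omega

lemma reg5 (m n t v : ℕ) (hn1 : 1 < n) (hmn : 2 * n ≤ 2 * (m * n)) (h4K : 2 * n + 4 * (t * n) = 2 * (m * n)) (h : 2*n ≤ v ∧ v < 2*(m*n) ∧ (v - 2*n) % 4 = 3) :
    fio n v = fio (m*n) (fseq (2*n) 1 2 (t*n) (fio (m*n) (fseq (2*n) 1 2 (t*n) (fseq (2*n) 1 3 (t*n) (fseq (2*n) 2 3 (t*n) (fio (m*n) (fseq (2*n) 2 3 (t*n) (fseq (2*n) 1 3 (t*n) (v))))))))) := by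
  have s1 := fseq_spec (2*n) 1 3 (t*n) (v)
  have e1 : fseq (2*n) 1 3 (t*n) (v) = v-2 := by omega
  rw [e1]
  clear s1 e1
  have s2 := fseq_spec (2*n) 2 3 (t*n) (v-2)
  have e2 : fseq (2*n) 2 3 (t*n) (v-2) = v-2 := by omega
  rw [e2]
  clear s2 e2
  have s3 := fio_spec (m*n) (v-2)
  have e3 : fio (m*n) (v-2) = v-3 := by omega
  rw [e3]
  clear s3 e3
  have s4 := fseq_spec (2*n) 2 3 (t*n) (v-3)
  have e4 : fseq (2*n) 2 3 (t*n) (v-3) = v-3 := by omega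
  rw [e4]
  clear s4 e4
  have s5 := fseq_spec (2*n) 1 3 (t*n) (v-3)
  have e5 : fseq (2*n) 1 3 (t*n) (v-3) = v-3 := by omega
  rw [e5]
  clear s5 e5
  have s6 := fseq_spec (2*n) 1 2 (t*n) (v-3)
  have e6 : fseq (2*n) 1 2 (t*n) (v-3) = v-3 := by omega
  rw [e6]
  clear s6 e6
  have s7 := fio_spec (m*n) (v-3)
  have e7 : fio (m*n) (v-3) = v-2 := by omega
  rw [e7]
  clear s7 e7
  have s8 := fseq_spec (2*n) 1 2 (t*n) (v-2)
  have e8 : fseq (2*n) 1 2 (t*n) (v-2) = v-1 := by omega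
  rw [e8]
  clear s8 e8
  have s9 := fio_spec (m*n) (v-1)
  have s0 := fio_spec n v
  omega

lemma reg6 (m n t v : ℕ) (hn1 : 1 < n) (hmn : 2 * n ≤ 2 * (m * n)) (h4K : 2 * n + 4 * (t * n) = 2 * (m * n)) (h : 2*(m*n) ≤ v) :
    fio n v = fio (m*n) (fseq (2*n) 1 2 (t*n) (fio (m*n) (fseq (2*n) 1 2 (t*n) (fseq (2*n) 1 3 (t*n) (fseq (2*n) 2 3 (t*n) (fio (m*n) (fseq (2*n) 2 3 (t*n) (fseq (2*n) 1 3 (t*n) (v))))))))) := by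
  have s1 := fseq_spec (2*n) 1 3 (t*n) (v)
  have e1 : fseq (2*n) 1 3 (t*n) (v) = v := by omega
  rw [e1]
  clear s1 e1
  have s2 := fseq_spec (2*n) 2 3 (t*n) (v)
  have e2 : fseq (2*n) 2 3 (t*n) (v) = v := by omega
  rw [e2]
  clear s2 e2
  have s3 := fio_spec (m*n) (v)
  have e3 : fio (m*n) (v) = v := by omega
  rw [e3]
  clear s3 e3
  have s4 := fseq_spec (2*n) 2 3 (t*n) (v)
  have e4 : fseq (2*n) 2 3 (t*n) (v) = v := by omega
  rw [e4]
  clear s4 e4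
  have s5 := fseq_spec (2*n) 1 3 (t*n) (v)
  have e5 : fseq (2*n) 1 3 (t*n) (v) = v := by omega
  rw [e5]
  clear s5 e5
  have s6 := fseq_spec (2*n) 1 2 (t*n) (v)
  have e6 : fseq (2*n) 1 2 (t*n) (v) = v := by omega
  rw [e6]
  clear s6 e6
  have s7 := fio_spec (m*n) (v)
  have e7 : fio (m*n) (v) = v := by omega
  rw [e7]
  clear s7 e7
  have s8 := fseq_spec (2*n) 1 2 (t*n) (v)
  have e8 : fseq (2*n) 1 2 (t*n) (v) = v := by omega
  rw [e8]
  clear s8 e8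
  have s9 := fio_spec (m*n) (v)
  have s0 := fio_spec n v
  omega

lemma chain_eval (m n t v : ℕ) (hn1 : 1 < n) (hmn : 2 * n ≤ 2 * (m * n))
    (h4K : 2 * n + 4 * (t * n) = 2 * (m * n)) :
    fio n v = fio (m*n) (fseq (2*n) 1 2 (t*n) (fio (m*n) (fseq (2*n) 1 2 (t*n) (fseq (2*n) 1 3 (t*n) (fseq (2*n) 2 3 (t*n) (fio (m*n) (fseq (2*n) 2 3 (t*n) (fseq (2*n) 1 3 (t*n) (v))))))))) := by
  have hreg : (v < 2*n ∧ v % 2 = 0) ∨ (v < 2*n ∧ v % 2 = 1) ∨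
      (2*n ≤ v ∧ v < 2*(m*n) ∧ (v - 2*n) % 4 = 0) ∨
      (2*n ≤ v ∧ v < 2*(m*n) ∧ (v - 2*n) % 4 = 1) ∨
      (2*n ≤ v ∧ v < 2*(m*n) ∧ (v - 2*n) % 4 = 2) ∨
      (2*n ≤ v ∧ v < 2*(m*n) ∧ (v - 2*n) % 4 = 3) ∨
      (2*(m*n) ≤ v) := by omega
  rcases hreg with h|h|h|h|h|h|h
  exacts [reg0 m n t v hn1 hmn h4K h, reg1 m n t v hn1 hmn h4K h,
    reg2 m n t v hn1 hmn h4K h, reg3 m n t v hn1 hmn h4K h,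
    reg4 m n t v hn1 hmn h4K h, reg5 m n t v hn1 hmn h4K h,
    reg6 m n t v hn1 hmn h4K h]

/-- Lemma 8.4(1): for odd `m, n > 1` and `N ≥ 2mn`, one has `q_{ι_{mn}}(ι_n) = 3` in the
symmetric group of `Fin N`; in particular `ι_n` is a product of three conjugates of `ι_{mn}`. -/
theorem qnorm_iota_mul_iota_eq_three (m n N : ℕ)
    (hm : Odd m) (hm1 : 1 < m) (hn : Odd n) (hn1 : 1 < n) (hN : 2 * (m * n) ≤ N) :
    qnorm (iotaFin N (m * n)) (iotaFin N n) = 3 ∧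
    ∃ σ₁ σ₂ σ₃ : Equiv.Perm (Fin N),
      IsConj (iotaFin N (m * n)) σ₁ ∧ IsConj (iotaFin N (m * n)) σ₂ ∧
      IsConj (iotaFin N (m * n)) σ₃ ∧ iotaFin N n = σ₁ * σ₂ * σ₃ := by
  obtain ⟨t, ht⟩ := hm
  have hmn : 2 * n ≤ 2 * (m * n) := by nlinarith
  have h4K : 2 * n + 4 * (t * n) = 2 * (m * n) := by rw [ht]; ring
  have hKN : 2 * n + 4 * (t * n) ≤ N := by omega
  have hπ₂app := swapSeq_apply N (2 * n) 1 2 (t * n) (by omega) (by omega) hKN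
  have hAapp := swapSeq_apply N (2 * n) 1 3 (t * n) (by omega) (by omega) hKN
  have hBapp := swapSeq_apply N (2 * n) 2 3 (t * n) (by omega) (by omega) hKN
  have hιapp := iotaFin_apply N (m * n) hN
  have hιnapp := iotaFin_apply N n (by omega)
  -- involutions
  have hπ₂inv : (swapSeq N (2 * n) 1 2 (t * n))⁻¹ = swapSeq N (2 * n) 1 2 (t * n) := by
    refine inv_eq_of_mul_eq_one_right (Equiv.ext fun x => Fin.ext ?_)
    simp only [Equiv.Perm.mul_apply, Equiv.Perm.one_apply, hπ₂app]
    have := fseq_spec (2 * n) 1 2 (t * n) x.val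
    have := fseq_spec (2 * n) 1 2 (t * n) (fseq (2 * n) 1 2 (t * n) x.val)
    omega
  have hAinv : (swapSeq N (2 * n) 1 3 (t * n))⁻¹ = swapSeq N (2 * n) 1 3 (t * n) := by
    refine inv_eq_of_mul_eq_one_right (Equiv.ext fun x => Fin.ext ?_)
    simp only [Equiv.Perm.mul_apply, Equiv.Perm.one_apply, hAapp]
    have := fseq_spec (2 * n) 1 3 (t * n) x.val
    have := fseq_spec (2 * n) 1 3 (t * n) (fseq (2 * n) 1 3 (t * n) x.val)
    omega
  have hBinv : (swapSeq N (2 * n) 2 3 (t * n))⁻¹ = swapSeq N (2 * n) 2 3 (t * n) := by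
    refine inv_eq_of_mul_eq_one_right (Equiv.ext fun x => Fin.ext ?_)
    simp only [Equiv.Perm.mul_apply, Equiv.Perm.one_apply, hBapp]
    have := fseq_spec (2 * n) 2 3 (t * n) x.val
    have := fseq_spec (2 * n) 2 3 (t * n) (fseq (2 * n) 2 3 (t * n) x.val)
    omega
  have hιinv : (iotaFin N (m * n))⁻¹ = iotaFin N (m * n) := by
    refine inv_eq_of_mul_eq_one_right (Equiv.ext fun x => Fin.ext ?_)
    simp only [Equiv.Perm.mul_apply, Equiv.Perm.one_apply, hιapp]
    have := fio_spec (m * n) x.val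
    have := fio_spec (m * n) (fio (m * n) x.val)
    omega
  -- the conjugates
  set σ₂ := swapSeq N (2 * n) 1 2 (t * n) * iotaFin N (m * n) *
      (swapSeq N (2 * n) 1 2 (t * n))⁻¹ with hσ₂def
  set σ₃ := (swapSeq N (2 * n) 1 3 (t * n) * swapSeq N (2 * n) 2 3 (t * n)) *
      iotaFin N (m * n) *
      (swapSeq N (2 * n) 1 3 (t * n) * swapSeq N (2 * n) 2 3 (t * n))⁻¹ with hσ₃def
  have hconj₂ : IsConj (iotaFin N (m * n)) σ₂ :=
    isConj_iff.mpr ⟨swapSeq N (2 * n) 1 2 (t * n), rfl⟩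
  have hconj₃ : IsConj (iotaFin N (m * n)) σ₃ :=
    isConj_iff.mpr ⟨swapSeq N (2 * n) 1 3 (t * n) * swapSeq N (2 * n) 2 3 (t * n), rfl⟩
  -- pointwise formulas for the conjugates
  have hσ₂app : ∀ x : Fin N, (σ₂ x).val =
      fseq (2 * n) 1 2 (t * n) (fio (m * n) (fseq (2 * n) 1 2 (t * n) x.val)) := by
    intro x
    rw [hσ₂def, hπ₂inv]
    simp only [Equiv.Perm.mul_apply, hπ₂app, hιapp]
  have hσ₃app : ∀ x : Fin N, (σ₃ x).val =
      fseq (2 * n) 1 3 (t * n) (fseq (2 * n) 2 3 (t * n) (fio (m * n)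
        (fseq (2 * n) 2 3 (t * n) (fseq (2 * n) 1 3 (t * n) x.val)))) := by
    intro x
    rw [hσ₃def, mul_inv_rev, hAinv, hBinv]
    simp only [Equiv.Perm.mul_apply, hAapp, hBapp, hιapp]
  -- the key identity
  have hkey : iotaFin N n = iotaFin N (m * n) * σ₂ * σ₃ := by
    refine Equiv.ext fun x => Fin.ext ?_
    simp only [Equiv.Perm.mul_apply, hιnapp, hιapp, hσ₂app, hσ₃app]
    exact chain_eval m n t x.val hn1 hmn h4K
  refine ⟨?_, iotaFin N (m * n), σ₂, σ₃, IsConj.refl _, hconj₂, hconj₃, hkey⟩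
  -- now the value of qnorm
  rw [qnorm]
  have h3S : 3 ∈ {c | ∃ L : List (Equiv.Perm (Fin N)), L.length = c ∧
      (∀ y ∈ L, IsConj (iotaFin N (m * n)) y ∨ IsConj (iotaFin N (m * n))⁻¹ y) ∧
      L.prod = iotaFin N n} := by
    refine ⟨[iotaFin N (m * n), σ₂, σ₃], rfl, ?_, ?_⟩
    · rintro y hy
      simp only [List.mem_cons, List.not_mem_nil, or_false] at hy
      rcases hy with rfl | rfl | rfl
      exacts [Or.inl (IsConj.refl _), Or.inl hconj₂, Or.inl hconj₃]
    · simp [hkey, mul_assoc]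
  have h0S : 0 ∉ {c | ∃ L : List (Equiv.Perm (Fin N)), L.length = c ∧
      (∀ y ∈ L, IsConj (iotaFin N (m * n)) y ∨ IsConj (iotaFin N (m * n))⁻¹ y) ∧
      L.prod = iotaFin N n} := by
    rintro ⟨L, hlen, -, hprod⟩
    rw [List.length_eq_zero_iff.mp hlen, List.prod_nil] at hprod
    have h0 := congrArg (fun p : Equiv.Perm (Fin N) => (p ⟨0, by omega⟩).val) hprod
    simp only [Equiv.Perm.one_apply, hιnapp] at h0
    have hfio := fio_spec n 0
    have h0' : (0 : ℕ) = fio n 0 := h0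
    omega
  have h1S : 1 ∉ {c | ∃ L : List (Equiv.Perm (Fin N)), L.length = c ∧
      (∀ y ∈ L, IsConj (iotaFin N (m * n)) y ∨ IsConj (iotaFin N (m * n))⁻¹ y) ∧
      L.prod = iotaFin N n} := by
    rintro ⟨L, hlen, hconj, hprod⟩
    obtain ⟨y, rfl⟩ := List.length_eq_one_iff.mp hlen
    rw [List.prod_singleton] at hprod
    have hy : IsConj (iotaFin N (m * n)) (iotaFin N n) := by
      rcases hconj y (by simp) with h | h
      · exact hprod ▸ h
      · rw [hιinv] at h; exact hprod ▸ h
    have hcard := card_support_eq_of_isConj hy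
    rw [iotaFin_card_support N (m * n) hN, iotaFin_card_support N n (by omega)] at hcard
    nlinarith
  have h2S : 2 ∉ {c | ∃ L : List (Equiv.Perm (Fin N)), L.length = c ∧
      (∀ y ∈ L, IsConj (iotaFin N (m * n)) y ∨ IsConj (iotaFin N (m * n))⁻¹ y) ∧
      L.prod = iotaFin N n} := by
    rintro ⟨L, hlen, hconj, hprod⟩
    obtain ⟨y, z, rfl⟩ := List.length_eq_two.mp hlen
    have hsι : Equiv.Perm.sign (iotaFin N (m * n)) = -1 := by
      rw [iotaFin_sign N (m * n) hN, Odd.neg_one_pow (Odd.mul (⟨t, by omega⟩ : Odd m) hn)]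
    have hsign : ∀ w ∈ [y, z], Equiv.Perm.sign w = -1 := by
      intro w hw
      rcases hconj w hw with h | h
      · rw [← sign_eq_of_isConj h, hsι]
      · rw [← sign_eq_of_isConj h, hιinv, hsι]
    have hy := hsign y (by simp)
    have hz := hsign z (by simp)
    have hg : Equiv.Perm.sign (iotaFin N n) = -1 := by
      rw [iotaFin_sign N n (by omega), Odd.neg_one_pow hn]
    have hone : Equiv.Perm.sign ((y :: [z] : List _).prod) = 1 := by
      simp [hy, hz]
    rw [hprod, hg] at hone
    exact absurd hone (by decide)
  have hne : Set.Nonempty {c | ∃ L : List (Equiv.Perm (Fin N)), L.length = c ∧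
      (∀ y ∈ L, IsConj (iotaFin N (m * n)) y ∨ IsConj (iotaFin N (m * n))⁻¹ y) ∧
      L.prod = iotaFin N n} := ⟨3, h3S⟩
  have hmem := Nat.sInf_mem hne
  have hle := Nat.sInf_le h3S
  set q := sInf {c | ∃ L : List (Equiv.Perm (Fin N)), L.length = c ∧
      (∀ y ∈ L, IsConj (iotaFin N (m * n)) y ∨ IsConj (iotaFin N (m * n))⁻¹ y) ∧
      L.prod = iotaFin N n} with hq
  interval_cases q
  · exact absurd hmem h0S
  · exact absurd hmem h1S
  · exact absurd hmem h2S
  · rfl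
end

section
/- Let k and l be positive integers and let N be an integer with N ≥ 2 · 3^{max(k,l)}. Then in the symmetric group of permutations of Fin N, max( q_{ι_{3^k}}(ι_{3^l}), q_{ι_{3^l}}(ι_{3^k}) ) = 3^{|k−l|}; consequently the Tsuboi distance between the symmetrized conjugacy classes of ι_{3^k} and ι_{3^l} equals |k − l| · log 3. -/
/-!
Write `a = 3^k ≤ b = 3^l = c a` with `c = 3^(l-k)` odd. Cutting the `b` transpositions of `ι_b`
into `c` blocks of `a` shows `q_{ι_a}(ι_b) ≤ c`, and since a product of `q` conjugates of `ι_a`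
moves at most `2aq` points while `ι_b` moves `2b`, equality holds. Conversely, on the `4t` points
moved by `ι_b` but not by `ι_a` (where `b = a + 2t`) the three nonzero translations of the Klein
four-group multiply to `1`, so `ι_a = ι_a³` is a product of three permutations of the cycle type
of `ι_b`. Hence `q_{ι_b}(ι_a) ≤ 3 ≤ c` when `c ≠ 1`, and the maximum is `c`.
-/

open Equiv Equiv.Perm Multiset
open scoped Finset

section qnorm

variable {G : Type*} [Group G]

theorem qnorm_le_length {x g : G} {L : List G} (hL : ∀ y ∈ L, IsConj x y)
    (hg : IsConj L.prod g) : qnorm x g ≤ L.length := by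
  obtain ⟨c, rfl⟩ := isConj_iff.mp hg
  refine Nat.sInf_le ⟨L.map (MulAut.conj c), List.length_map _, ?_, ?_⟩
  · simp only [List.mem_map]
    rintro _ ⟨y, hy, rfl⟩
    exact Or.inl ((hL y hy).trans (isConj_iff.mpr ⟨c, rfl⟩))
  · rw [← map_list_prod, MulAut.conj_apply]

theorem exists_length_eq_qnorm {x g : G}
    (hg : ∃ L : List G, (∀ y ∈ L, IsConj x y) ∧ L.prod = g) :
    ∃ L : List G, L.length = qnorm x g ∧ (∀ y ∈ L, IsConj x y ∨ IsConj x⁻¹ y) ∧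
      L.prod = g := by
  obtain ⟨L, hL, rfl⟩ := hg
  exact Nat.sInf_mem (s := {n | ∃ L' : List G, L'.length = n ∧
    (∀ y ∈ L', IsConj x y ∨ IsConj x⁻¹ y) ∧ L'.prod = L.prod})
    ⟨L.length, L, rfl, fun y hy => Or.inl (hL y hy), rfl⟩

end qnorm

namespace Equiv.Perm

variable {α : Type*} [Fintype α] [DecidableEq α]

theorem card_support_list_prod_le (L : List (Perm α)) {m : ℕ}
    (h : ∀ y ∈ L, #y.support ≤ m) : #L.prod.support ≤ L.length * m := by
  induction L with
  | nil => simp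
  | cons y L ih =>
    rw [List.forall_mem_cons] at h
    calc #(y * L.prod).support ≤ #y.support + #L.prod.support :=
          (Finset.card_le_card (support_mul_le y L.prod)).trans (Finset.card_union_le _ _)
      _ ≤ m + L.length * m := add_le_add h.1 (ih h.2)
      _ = (y :: L).length * m := by rw [List.length_cons]; ring

theorem _root_.IsConj.card_support_eq {x y : Perm α} (h : IsConj x y) :
    #x.support = #y.support := by
  obtain ⟨c, rfl⟩ := isConj_iff.mp h
  exact card_support_conj.symm

theorem card_support_le_qnorm_mul {x g : Perm α}
    (hg : ∃ L : List (Perm α), (∀ y ∈ L, IsConj x y) ∧ L.prod = g) :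
    #g.support ≤ qnorm x g * #x.support := by
  obtain ⟨L, hlen, hL, rfl⟩ := exists_length_eq_qnorm hg
  rw [← hlen]
  refine card_support_list_prod_le L fun y hy =>
    (hL y hy).elim (·.card_support_eq.ge) fun h => ?_
  rw [← support_inv x]
  exact h.card_support_eq.ge

theorem cycleType_eq_replicate_of_mul_self {σ : Perm α} (h : σ * σ = 1) :
    σ.cycleType = replicate (#σ.support / 2) 2 := by
  have hσ := cycleType_of_pow_prime_eq_one (p := 2) (by rwa [sq])
  rw [← sum_cycleType, hσ, sum_replicate, smul_eq_mul, Nat.mul_div_cancel _ two_pos]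

theorem cycleType_eq_replicate_of_mul_self_of_apply_ne {σ : Perm α} (h : σ * σ = 1)
    (hσ : ∀ x, σ x ≠ x) : σ.cycleType = replicate (Fintype.card α / 2) 2 := by
  rw [cycleType_eq_replicate_of_mul_self h,
    Finset.eq_univ_of_forall fun x => mem_support.mpr (hσ x), Finset.card_univ]

theorem cycleType_sumCongr {β : Type*} [Fintype β] [DecidableEq β] (σ : Perm α)
    (τ : Perm β) :
    (sumCongr σ τ).cycleType = σ.cycleType + τ.cycleType := by
  have hσ : sumCongr σ 1 = σ.extendDomain (Set.rangeInl α β).symm := by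
    ext (a | b)
    · exact (extendDomain_apply_image σ (Set.rangeInl α β).symm a).symm
    · simp [extendDomain_apply_not_subtype]
  have hτ : sumCongr 1 τ = τ.extendDomain (Set.rangeInr α β).symm := by
    ext (a | b)
    · simp [extendDomain_apply_not_subtype]
    · exact (extendDomain_apply_image τ (Set.rangeInr α β).symm b).symm
  have hd : (sumCongr σ (1 : Perm β)).Disjoint (sumCongr 1 τ) := by
    rintro (a | b) <;> simp
  rw [show sumCongr σ τ = sumCongr σ 1 * sumCongr 1 τ by rw [sumCongr_mul, mul_one, one_mul],
    hd.cycleType_mul, hσ, hτ,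
    cycleType_extendDomain, cycleType_extendDomain]

theorem cycleType_prodCongr_addRight {β V : Type*} [Fintype β] [DecidableEq β] [AddGroup V]
    [Fintype V] [DecidableEq V] {v : V} (hv : v + v = 0) (hv0 : v ≠ 0) :
    cycleType (prodCongr (Equiv.refl β) (Equiv.addRight v) : Perm (β × V)) =
      replicate (Fintype.card β * Fintype.card V / 2) 2 := by
  rw [cycleType_eq_replicate_of_mul_self_of_apply_ne, Fintype.card_prod]
  · ext ⟨b, w⟩ <;> simp [add_assoc, hv]
  · simp [hv0]

theorem exists_cycleType_mul_mul_eq_replicate (a t : ℕ) (h : 2 * a + 4 * t ≤ Fintype.card α) :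
    ∃ σ τ ρ : Perm α, σ.cycleType = replicate (a + 2 * t) 2 ∧
      τ.cycleType = replicate (a + 2 * t) 2 ∧ ρ.cycleType = replicate (a + 2 * t) 2 ∧
      (σ * τ * ρ).cycleType = replicate a 2 := by
  let R : Perm (Fin a × ZMod 2) := prodCongr (Equiv.refl _) (Equiv.addRight 1)
  let T (v : ZMod 2 × ZMod 2) : Perm (Fin t × (ZMod 2 × ZMod 2)) :=
    prodCongr (Equiv.refl _) (Equiv.addRight v)
  have hR : R.cycleType = replicate a 2 := by
    simpa using cycleType_prodCongr_addRight (β := Fin a) (v := (1 : ZMod 2)) rfl one_ne_zero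
  have hT (v : ZMod 2 × ZMod 2) (hv : v ≠ 0) : (T v).cycleType = replicate (2 * t) 2 := by
    rw [cycleType_prodCongr_addRight (by decide +revert) hv]
    simp [Nat.mul_div_assoc, mul_comm]
  have hprod : sumCongr R (T (1, 0)) * sumCongr R (T (0, 1)) * sumCongr R (T (1, 1)) =
      sumCongr R 1 := by
    ext (⟨i, x⟩ | ⟨i, v⟩) <;> simp [R, T] <;> decide +revert
  have hRT (v) (hv : v ≠ 0) : (sumCongr R (T v)).cycleType = replicate (a + 2 * t) 2 := by
    rw [cycleType_sumCongr, hR, hT v hv, replicate_add]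
  obtain ⟨e⟩ := Function.Embedding.nonempty_of_card_le
    (α := (Fin a × ZMod 2) ⊕ (Fin t × (ZMod 2 × ZMod 2))) (β := α) (by simp; omega)
  let φ := extendDomainHom e.toEquivRange
  have hφ (g) : (φ g).cycleType = g.cycleType := cycleType_extendDomain _
  refine ⟨φ (sumCongr R (T (1, 0))), φ (sumCongr R (T (0, 1))), φ (sumCongr R (T (1, 1))),
    (hφ _).trans (hRT _ (by decide)), (hφ _).trans (hRT _ (by decide)),
    (hφ _).trans (hRT _ (by decide)), ?_⟩
  rw [← map_mul, ← map_mul, hprod, hφ, cycleType_sumCongr, hR, cycleType_one, add_zero]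

end Equiv.Perm

def pairSwap (N i : ℕ) : Perm (Fin N) :=
  if h : 2 * i + 1 < N then swap ⟨2 * i, by omega⟩ ⟨2 * i + 1, h⟩ else 1

theorem iotaFin_eq_prod_pairSwap (N m : ℕ) :
    iotaFin N m = ((List.range m).map (pairSwap N)).prod := rfl

section pairSwap

variable {N : ℕ}

theorem support_pairSwap {i : ℕ} (h : 2 * i + 1 < N) :
    (pairSwap N i).support = {⟨2 * i, by omega⟩, ⟨2 * i + 1, h⟩} := by
  rw [pairSwap, dif_pos h, support_swap (by simp [Fin.ext_iff])]

theorem isCycle_pairSwap {i : ℕ} (h : 2 * i + 1 < N) : (pairSwap N i).IsCycle := by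
  rw [pairSwap, dif_pos h]
  exact isCycle_swap (by simp [Fin.ext_iff])

theorem disjoint_pairSwap {i j : ℕ} (hi : 2 * i + 1 < N) (hj : 2 * j + 1 < N) (hij : i ≠ j) :
    (pairSwap N i).Disjoint (pairSwap N j) := by
  rw [disjoint_iff_disjoint_support, support_pairSwap hi, support_pairSwap hj]
  simp [Fin.ext_iff]
  omega

theorem cycleType_prod_pairSwap {l : List ℕ} (hl : l.Nodup) (hN : ∀ i ∈ l, 2 * i + 1 < N) :
    (l.map (pairSwap N)).prod.cycleType = replicate l.length 2 := by
  rw [cycleType_eq _ rfl, eq_replicate]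
  · constructor
    · simp
    · simp only [List.map_map, mem_coe, List.mem_map, Function.comp_apply]
      rintro _ ⟨i, hi, rfl⟩
      rw [support_pairSwap (hN i hi), Finset.card_pair (by simp [Fin.ext_iff])]
  · simp only [List.mem_map]
    rintro _ ⟨i, hi, rfl⟩
    exact isCycle_pairSwap (hN i hi)
  · exact List.pairwise_map.mpr
      (hl.imp_of_mem fun hi hj hij => disjoint_pairSwap (hN _ hi) (hN _ hj) hij)

theorem cycleType_iotaFin {m : ℕ} (h : 2 * m ≤ N) :
    (iotaFin N m).cycleType = replicate m 2 := by
  rw [iotaFin_eq_prod_pairSwap, cycleType_prod_pairSwap List.nodup_range, List.length_range]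
  intro i hi
  rw [List.mem_range] at hi
  omega

theorem card_support_iotaFin {m : ℕ} (h : 2 * m ≤ N) : #(iotaFin N m).support = 2 * m := by
  rw [← sum_cycleType, cycleType_iotaFin h, sum_replicate, smul_eq_mul, mul_comm]

theorem exists_list_isConj_prod_eq_iotaFin_mul {a c : ℕ} (h : 2 * (c * a) ≤ N) :
    ∃ L : List (Perm (Fin N)), L.length = c ∧ (∀ y ∈ L, IsConj (iotaFin N a) y) ∧
      L.prod = iotaFin N (c * a) := by
  induction c with
  | zero => exact ⟨[], rfl, by simp, by rw [zero_mul]; rfl⟩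
  | succ c ih =>
    obtain ⟨L, hlen, hL, hprod⟩ := ih (by nlinarith)
    let block := (((List.range a).map (c * a + ·)).map (pairSwap N)).prod
    have hblock : IsConj (iotaFin N a) block := by
      rw [isConj_iff_cycleType_eq, cycleType_iotaFin (by nlinarith), cycleType_prod_pairSwap,
        List.length_map, List.length_range]
      · exact List.nodup_range.map (add_right_injective _)
      · simp only [List.mem_map, List.mem_range]
        rintro _ ⟨i, hi, rfl⟩
        nlinarith
    refine ⟨L ++ [block], by simp [hlen], ?_, ?_⟩
    · simp only [List.mem_append, List.mem_singleton]
      rintro y (hy | rfl)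
      exacts [hL y hy, hblock]
    · rw [List.prod_append, hprod, List.prod_singleton, Nat.succ_mul, iotaFin_eq_prod_pairSwap,
        iotaFin_eq_prod_pairSwap, List.range_add, List.map_append, List.prod_append]

theorem qnorm_iotaFin_iotaFin_mul {a c : ℕ} (ha : 0 < a) (h : 2 * (c * a) ≤ N) :
    qnorm (iotaFin N a) (iotaFin N (c * a)) = c := by
  obtain ⟨L, rfl, hL, hprod⟩ := exists_list_isConj_prod_eq_iotaFin_mul h
  refine le_antisymm (qnorm_le_length hL (by rw [hprod])) ?_
  rcases L.length.eq_zero_or_pos with hc | hc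
  · exact hc ▸ Nat.zero_le _
  have hsupp := card_support_le_qnorm_mul ⟨L, hL, hprod⟩
  rw [card_support_iotaFin h, card_support_iotaFin (by nlinarith)] at hsupp
  nlinarith

theorem qnorm_iotaFin_add_le_three {a t : ℕ} (h : 2 * (a + 2 * t) ≤ N) :
    qnorm (iotaFin N (a + 2 * t)) (iotaFin N a) ≤ 3 := by
  obtain ⟨σ, τ, ρ, hσ, hτ, hρ, hprod⟩ :=
    exists_cycleType_mul_mul_eq_replicate (α := Fin N) a t (by simp; omega)
  refine qnorm_le_length (L := [σ, τ, ρ]) ?_ ?_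
  · simp only [List.mem_cons, List.not_mem_nil, or_false]
    rintro y (rfl | rfl | rfl) <;>
      rwa [isConj_iff_cycleType_eq, cycleType_iotaFin h, eq_comm]
  · rw [isConj_iff_cycleType_eq, cycleType_iotaFin (by omega), List.prod_cons, List.prod_cons,
      List.prod_singleton, ← mul_assoc, hprod]

theorem max_qnorm_iotaFin_mul {a c : ℕ} (ha : 0 < a) (hc : Odd c) (h : 2 * (c * a) ≤ N) :
    max (qnorm (iotaFin N a) (iotaFin N (c * a))) (qnorm (iotaFin N (c * a)) (iotaFin N a)) =
      c := by
  rw [qnorm_iotaFin_iotaFin_mul ha h, max_eq_left_iff]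
  obtain ⟨t, rfl⟩ := hc
  rcases t.eq_zero_or_pos with rfl | ht
  · simpa using (qnorm_iotaFin_iotaFin_mul (c := 1) ha (by simpa using h)).le
  · rw [show (2 * t + 1) * a = a + 2 * (t * a) by ring] at h ⊢
    exact (qnorm_iotaFin_add_le_three h).trans (by omega)

end pairSwap

theorem tsuboi_distance_iota_pow_three_general (k l N : ℕ)
    (hN : 2 * 3 ^ max k l ≤ N) :
    max (qnorm (iotaFin N (3 ^ k)) (iotaFin N (3 ^ l)))
        (qnorm (iotaFin N (3 ^ l)) (iotaFin N (3 ^ k))) = 3 ^ (max k l - min k l) ∧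
    Real.log (max (qnorm (iotaFin N (3 ^ k)) (iotaFin N (3 ^ l)))
        (qnorm (iotaFin N (3 ^ l)) (iotaFin N (3 ^ k))) : ℕ)
      = |(k : ℝ) - (l : ℝ)| * Real.log 3 := by
  wlog hkl : k ≤ l generalizing k l
  · obtain ⟨h₁, h₂⟩ := this l k (by rwa [max_comm]) (by omega)
    rw [max_comm, max_comm l, min_comm] at h₁
    rw [max_comm, abs_sub_comm] at h₂
    exact ⟨h₁, h₂⟩
  have hpow : 3 ^ l = 3 ^ (l - k) * 3 ^ k := by rw [← pow_add, Nat.sub_add_cancel hkl]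
  have hmax : max (qnorm (iotaFin N (3 ^ k)) (iotaFin N (3 ^ l)))
      (qnorm (iotaFin N (3 ^ l)) (iotaFin N (3 ^ k))) = 3 ^ (l - k) := by
    rw [hpow]
    exact max_qnorm_iotaFin_mul (by positivity) (Odd.pow (by decide))
      (by rwa [← hpow, ← max_eq_right hkl])
  rw [hmax, max_eq_right hkl, min_eq_left hkl, Nat.cast_pow, Real.log_pow, Nat.cast_sub hkl,
    abs_sub_comm, abs_of_nonneg (sub_nonneg.mpr (by exact_mod_cast hkl))]
  exact ⟨rfl, by push_cast; ring⟩

/-- Corollary 8.5: for positive `k, l` and `N ≥ 2·3^(max k l)`,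
`max (q_{ι_{3^k}}(ι_{3^l}), q_{ι_{3^l}}(ι_{3^k})) = 3^{|k−l|}`, so the Tsuboi distance
between the classes of `ι_{3^k}` and `ι_{3^l}` is `|k − l| · log 3`. -/
theorem tsuboi_distance_iota_pow_three (k l N : ℕ) (hk : 0 < k) (hl : 0 < l)
    (hN : 2 * 3 ^ max k l ≤ N) :
    max (qnorm (iotaFin N (3 ^ k)) (iotaFin N (3 ^ l)))
        (qnorm (iotaFin N (3 ^ l)) (iotaFin N (3 ^ k))) = 3 ^ (max k l - min k l) ∧
    Real.log (max (qnorm (iotaFin N (3 ^ k)) (iotaFin N (3 ^ l)))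
        (qnorm (iotaFin N (3 ^ l)) (iotaFin N (3 ^ k))) : ℕ)
      = |(k : ℝ) - (l : ℝ)| * Real.log 3 :=
  tsuboi_distance_iota_pow_three_general k l N hN
end

section
/- Let σ be a permutation of ℕ that is a cycle whose support is finite of cardinality n ≥ 2. Then there exists a positive integer k with k ≤ n such that σ is a product of three permutations of ℕ, each conjugate to ι_k. -/
/-!
Up to conjugacy, σ is the rotation `x ↦ x + 1 mod n` of `{0, …, n - 1}`, which is the product
of the reflections `x ↦ n - x` of `{1, …, n - 1}` and `x ↦ n - 1 - x` of `{0, …, n - 1}`,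
with `(n - 1) / 2` and `n / 2` transpositions. Pad each reflection with transpositions on fresh
points, `n / 2` for the first and `(n - 1) / 2` for the second, so that both become conjugates of
`ι_{n-1}`; the third factor is the product of all padding transpositions. These are disjoint
from each other and from the reflections, so they cancel out of the product.
-/

/-- `iotaNat k` is the permutation `(1,2)(3,4)⋯(2k−1,2k)` of `ℕ`. -/
def iotaNat (k : ℕ) : Equiv.Perm ℕ :=
  ((List.range k).map fun i => Equiv.swap (2 * i) (2 * i + 1)).prod

open Equiv Equiv.Perm Set

namespace Equiv.Perm

variable {α : Type*} {σ τ : Perm α} {p : α → Prop}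

theorem apply_iff_of_forall_ne (hp : ∀ x, σ x ≠ x → p x) (x : α) : p (σ x) ↔ p x := by
  by_cases hx : σ x = x
  · rw [hx]
  · exact iff_of_true (hp _ fun h => hx (σ.injective h)) (hp x hx)

theorem isCycle_subtypePerm_of_forall_ne (hσ : σ.IsCycle) (hp : ∀ x, σ x ≠ x → p x) :
    (σ.subtypePerm (apply_iff_of_forall_ne hp)).IsCycle := by
  obtain ⟨x, hx, hcyc⟩ := hσ
  refine ⟨⟨x, hp x hx⟩, fun h => hx (congrArg Subtype.val h), fun y hy => ?_⟩
  exact (hcyc fun h => hy (Subtype.ext h)).subtypePerm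

theorem card_support_subtypePerm_of_forall_ne [DecidableEq α] [Fintype (Subtype p)]
    (hp : ∀ x, σ x ≠ x → p x) :
    (σ.subtypePerm (apply_iff_of_forall_ne hp)).support.card = {x | σ x ≠ x}.ncard := by
  rw [← Fintype.card_coe, ← Nat.card_eq_fintype_card, ← Nat.card_coe_set_eq]
  refine Nat.card_congr ((subtypeEquivRight fun x => ?_).trans
    (subtypeSubtypeEquivSubtype fun {x} => hp x))
  simp [Subtype.ext_iff]

theorem isConj_of_isCycle_of_ncard_eq (hσ : σ.IsCycle) (hτ : τ.IsCycle)
    (hσfin : {x | σ x ≠ x}.Finite) (hτfin : {x | τ x ≠ x}.Finite)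
    (h : {x | σ x ≠ x}.ncard = {x | τ x ≠ x}.ncard) : IsConj σ τ := by
  classical
  set s := hσfin.toFinset ∪ hτfin.toFinset
  have hσs : ∀ x, σ x ≠ x → x ∈ s := fun x hx => Finset.mem_union_left _ (by simpa using hx)
  have hτs : ∀ x, τ x ≠ x → x ∈ s := fun x hx => Finset.mem_union_right _ (by simpa using hx)
  have hconj := ofSubtype.map_isConj <| (isCycle_subtypePerm_of_forall_ne hσ hσs).isConj
    (isCycle_subtypePerm_of_forall_ne hτ hτs) <| by
      rwa [card_support_subtypePerm_of_forall_ne hσs, card_support_subtypePerm_of_forall_ne hτs]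
  rwa [ofSubtype_subtypePerm _ hσs, ofSubtype_subtypePerm _ hτs] at hconj

end Equiv.Perm

section PairSwaps

variable {α : Type*} [DecidableEq α]

def pairSwaps (f : ℕ → α) (k : ℕ) : Perm α :=
  ((List.range k).map fun i => swap (f (2 * i)) (f (2 * i + 1))).prod

theorem pairSwaps_congr {f g : ℕ → α} {k : ℕ} (h : ∀ j < 2 * k, f j = g j) :
    pairSwaps f k = pairSwaps g k := by
  refine congrArg List.prod (List.map_congr_left fun i hi => ?_)
  have hi : i < k := List.mem_range.mp hi
  rw [h _ (by omega), h _ (by omega)]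

theorem pairSwaps_add (f : ℕ → α) (k l : ℕ) :
    pairSwaps f (k + l) = pairSwaps f k * pairSwaps (fun j => f (2 * k + j)) l := by
  simp only [pairSwaps, List.range_add, List.map_append, List.prod_append, List.map_map]
  congr 3
  ext i : 1
  simp only [Function.comp_apply, mul_add, add_assoc]

theorem pairSwaps_one (f : ℕ → α) : pairSwaps f 1 = swap (f 0) (f 1) := by
  simp [pairSwaps]

theorem pairSwaps_succ (f : ℕ → α) (k : ℕ) :
    pairSwaps f (k + 1) = pairSwaps f k * swap (f (2 * k)) (f (2 * k + 1)) := by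
  rw [pairSwaps_add, pairSwaps_one, add_zero]

theorem pairSwaps_apply_of_forall_ne (f : ℕ → α) (k : ℕ) {x : α} (hx : ∀ j < 2 * k, f j ≠ x) :
    pairSwaps f k x = x := by
  induction k with
  | zero => rfl
  | succ k ih =>
    rw [pairSwaps_succ, mul_apply, swap_apply_of_ne_of_ne (hx _ (by omega)).symm
      (hx _ (by omega)).symm, ih fun j hj => hx j (by omega)]

theorem pairSwaps_apply_pair (f : ℕ → α) {k i : ℕ} (hf : InjOn f (Iio (2 * k))) (hi : i < k) :
    pairSwaps f k (f (2 * i)) = f (2 * i + 1) ∧ pairSwaps f k (f (2 * i + 1)) = f (2 * i) := by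
  obtain ⟨l, rfl⟩ : ∃ l, k = i + (1 + l) := ⟨k - i - 1, by omega⟩
  have hfix : ∀ r < 2, pairSwaps f i (f (2 * i + r)) = f (2 * i + r) ∧
      pairSwaps (fun j => f (2 * i + 2 + j)) l (f (2 * i + r)) = f (2 * i + r) := by
    intro r hr
    constructor <;> refine pairSwaps_apply_of_forall_ne _ _ fun j hj h => ?_ <;>
      have := hf (mem_Iio.mpr (by omega)) (mem_Iio.mpr (by omega)) h <;> omega
  simp only [pairSwaps_add, pairSwaps_one, mul_apply, mul_add, add_zero, mul_one, ← add_assoc]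
  have h₀ := hfix 0 (by omega)
  have h₁ := hfix 1 (by omega)
  simp only [add_zero] at h₀
  rw [h₀.2, h₁.2, swap_apply_left, swap_apply_right, h₀.1, h₁.1]
  exact ⟨rfl, rfl⟩

theorem pairSwaps_mul_self (f : ℕ → α) {k : ℕ} (hf : InjOn f (Iio (2 * k))) :
    pairSwaps f k * pairSwaps f k = 1 := by
  ext x
  rw [mul_apply, one_apply]
  by_cases hx : ∃ j < 2 * k, f j = x
  · obtain ⟨j, hj, rfl⟩ := hx
    obtain ⟨i, rfl | rfl⟩ := Nat.even_or_odd' j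
    · obtain ⟨heven, hodd⟩ := pairSwaps_apply_pair f hf (i := i) (by omega)
      rw [heven, hodd]
    · obtain ⟨heven, hodd⟩ := pairSwaps_apply_pair f hf (i := i) (by omega)
      rw [hodd, heven]
  · push Not at hx
    rw [pairSwaps_apply_of_forall_ne f k hx, pairSwaps_apply_of_forall_ne f k hx]

theorem disjoint_pairSwaps {f g : ℕ → α} {k l : ℕ} (h : ∀ i < 2 * k, ∀ j < 2 * l, f i ≠ g j) :
    (pairSwaps f k).Disjoint (pairSwaps g l) := by
  intro x
  by_cases hx : ∃ i < 2 * k, f i = x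
  · obtain ⟨i, hi, rfl⟩ := hx
    exact Or.inr (pairSwaps_apply_of_forall_ne g l fun j hj => (h i hi j hj).symm)
  · push Not at hx
    exact Or.inl (pairSwaps_apply_of_forall_ne f k hx)

end PairSwaps

theorem isConj_iotaNat_pairSwaps {f : ℕ → ℕ} {k : ℕ} (hf : InjOn f (Iio (2 * k))) :
    IsConj (iotaNat k) (pairSwaps f k) := by
  obtain ⟨g, hg⟩ := Perm.exists_extending_pair (fun j : Fin (2 * k) => (j : ℕ)) (fun j => f j)
    Fin.val_injective fun i j h => Fin.ext (hf i.2 j.2 h)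
  refine isConj_iff.mpr ⟨g, ?_⟩
  rw [iotaNat, pairSwaps, ← MulAut.conj_apply, map_list_prod, List.map_map]
  refine congrArg List.prod (List.map_congr_left fun i hi => ?_)
  have hi : i < k := List.mem_range.mp hi
  simp only [Function.comp_apply, MulAut.conj_apply, ← swap_apply_apply]
  rw [hg ⟨2 * i, by omega⟩, hg ⟨2 * i + 1, by omega⟩]

theorem isConj_iotaNat_pairSwaps_mul {f g : ℕ → ℕ} {k l : ℕ} (hf : InjOn f (Iio (2 * k)))
    (hg : InjOn g (Iio (2 * l))) (hfg : ∀ i < 2 * k, ∀ j < 2 * l, f i ≠ g j) :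
    IsConj (iotaNat (k + l)) (pairSwaps f k * pairSwaps g l) := by
  set F : ℕ → ℕ := fun j => if j < 2 * k then f j else g (j - 2 * k)
  have hFf : pairSwaps F k = pairSwaps f k := pairSwaps_congr fun j hj => if_pos hj
  have hFg : pairSwaps (fun j => F (2 * k + j)) l = pairSwaps g l := by
    refine pairSwaps_congr fun j _ => ?_
    simp only [F, if_neg (Nat.not_lt.mpr (Nat.le_add_right _ _)), Nat.add_sub_cancel_left]
  rw [← hFf, ← hFg, ← pairSwaps_add]
  refine isConj_iotaNat_pairSwaps fun i hi j hj hij => ?_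
  simp only [mem_Iio] at hi hj
  simp only [F] at hij
  split_ifs at hij with h₁ h₂ h₂
  · exact hf h₁ h₂ hij
  · exact absurd hij (hfg i h₁ _ (by omega))
  · exact absurd hij.symm (hfg j h₂ _ (by omega))
  · have := hg (mem_Iio.mpr (by omega)) (mem_Iio.mpr (by omega)) hij
    omega

def reflPairs (lo hi j : ℕ) : ℕ := if j % 2 = 0 then lo + j / 2 else hi - j / 2

def reflection (lo hi : ℕ) : Perm ℕ := pairSwaps (reflPairs lo hi) ((hi + 1 - lo) / 2)

theorem injOn_reflPairs (lo hi : ℕ) : InjOn (reflPairs lo hi) (Iio (2 * ((hi + 1 - lo) / 2))) := by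
  intro i hi' j hj hij
  simp only [mem_Iio] at hi' hj
  simp only [reflPairs] at hij
  split_ifs at hij <;> omega

theorem reflPairs_mem_Icc {lo hi j : ℕ} (hj : j < 2 * ((hi + 1 - lo) / 2)) :
    reflPairs lo hi j ∈ Icc lo hi := by
  simp only [reflPairs, mem_Icc]
  split_ifs <;> omega

theorem reflection_apply (lo hi x : ℕ) :
    reflection lo hi x = if lo ≤ x ∧ x ≤ hi then lo + hi - x else x := by
  set m := (hi + 1 - lo) / 2
  by_cases hlow : lo ≤ x ∧ x - lo < m
  · have hx : reflPairs lo hi (2 * (x - lo)) = x := by simp only [reflPairs]; split_ifs <;> omega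
    rw [reflection, ← hx, (pairSwaps_apply_pair _ (injOn_reflPairs lo hi) hlow.2).1, hx]
    simp only [reflPairs]
    split_ifs <;> omega
  by_cases hhigh : x ≤ hi ∧ hi - x < m
  · have hx : reflPairs lo hi (2 * (hi - x) + 1) = x := by
      simp only [reflPairs]; split_ifs <;> omega
    rw [reflection, ← hx, (pairSwaps_apply_pair _ (injOn_reflPairs lo hi) hhigh.2).2, hx]
    simp only [reflPairs]
    split_ifs <;> omega
  rw [reflection, pairSwaps_apply_of_forall_ne]
  · split_ifs <;> omega
  · intro j hj
    simp only [reflPairs]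
    split_ifs <;> omega

def rotateNat (n : ℕ) : Perm ℕ := (finRotate n).extendDomain Fin.equivSubtype

theorem rotateNat_apply (n x : ℕ) :
    rotateNat n x = if x + 1 < n then x + 1 else if x + 1 = n then 0 else x := by
  by_cases hx : x < n
  · obtain ⟨m, rfl⟩ := Nat.exists_eq_add_of_lt hx
    rw [rotateNat, extendDomain_apply_subtype (b := x) _ _ hx]
    change ((finRotate (x + m).succ ⟨x, hx⟩ : ℕ)) = _
    simp only [coe_finRotate, Fin.ext_iff, Fin.val_last]
    split_ifs <;> omega
  · rw [rotateNat, extendDomain_apply_not_subtype (b := x) _ _ hx]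
    split_ifs <;> omega

theorem isCycle_rotateNat {n : ℕ} (hn : 2 ≤ n) : (rotateNat n).IsCycle :=
  (isCycle_finRotate_of_le hn).extendDomain _

theorem setOf_rotateNat_apply_ne {n : ℕ} (hn : 2 ≤ n) : {x | rotateNat n x ≠ x} = Iio n := by
  ext x
  rw [mem_ofPred_eq, rotateNat_apply, mem_Iio]
  split_ifs <;> omega

theorem reflection_mul_reflection (n : ℕ) :
    reflection 1 (n - 1) * reflection 0 (n - 1) = rotateNat n := by
  ext x
  simp only [mul_apply, reflection_apply, rotateNat_apply]
  split_ifs <;> omega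

theorem exists_rotateNat_eq_mul_mul_of_isConj_iotaNat (n : ℕ) :
    ∃ g₁ g₂ g₃ : Perm ℕ, IsConj (iotaNat (n - 1)) g₁ ∧ IsConj (iotaNat (n - 1)) g₂ ∧
      IsConj (iotaNat (n - 1)) g₃ ∧ rotateNat n = g₁ * g₂ * g₃ := by
  -- the numbers of transpositions of `reflection 0 (n - 1)` and `reflection 1 (n - 1)`
  set a := (n - 1 + 1 - 0) / 2
  set b := (n - 1 + 1 - 1) / 2
  set P₁ := pairSwaps (n + ·) a
  set P₂ := pairSwaps (fun j => n + (2 * a + j)) b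
  have hinj₁ : InjOn (n + ·) (Iio (2 * a)) := (add_right_injective n).injOn
  have hinj₂ : InjOn (fun j => n + (2 * a + j)) (Iio (2 * b)) :=
    ((add_right_injective n).comp (add_right_injective (2 * a))).injOn
  have hι : iotaNat (n - 1) = iotaNat (a + b) := congrArg iotaNat (by omega)
  refine ⟨reflection 1 (n - 1) * P₁, reflection 0 (n - 1) * P₂, P₁ * P₂, ?_, ?_, ?_, ?_⟩
  · rw [hι, add_comm]
    refine isConj_iotaNat_pairSwaps_mul (injOn_reflPairs _ _) hinj₁ fun i hi j _ => ?_
    have := (reflPairs_mem_Icc hi).2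
    omega
  · rw [hι]
    refine isConj_iotaNat_pairSwaps_mul (injOn_reflPairs _ _) hinj₂ fun i hi j _ => ?_
    have := (reflPairs_mem_Icc hi).2
    omega
  · rw [hι, ← pairSwaps_add]
    exact isConj_iotaNat_pairSwaps (add_right_injective n).injOn
  · have hP₁R : Commute P₁ (reflection 0 (n - 1)) := (disjoint_pairSwaps fun i _ j hj => by
      have := (reflPairs_mem_Icc hj).2
      omega).commute
    have hP₂P₁ : Commute P₂ P₁ := (disjoint_pairSwaps fun i _ j hj => by omega).commute
    calc rotateNat n = reflection 1 (n - 1) * reflection 0 (n - 1) :=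
          (reflection_mul_reflection n).symm
      _ = reflection 1 (n - 1) * reflection 0 (n - 1) * (P₁ * P₁) * (P₂ * P₂) := by
          rw [pairSwaps_mul_self _ hinj₁, pairSwaps_mul_self _ hinj₂, mul_one, mul_one]
      _ = reflection 1 (n - 1) * (P₁ * reflection 0 (n - 1)) * (P₂ * P₁) * P₂ := by
          rw [hP₁R.eq, hP₂P₁.eq]
          simp only [mul_assoc]
      _ = reflection 1 (n - 1) * P₁ * (reflection 0 (n - 1) * P₂) * (P₁ * P₂) := by
          simp only [mul_assoc]

/-- Lemma 8.12: if `σ` is a finitely supported cycle of `ℕ` with support of size `n ≥ 2`,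
then there is a positive `k ≤ n` such that `σ` is a product of three conjugates of `ι_k`. -/
theorem cycle_eq_prod_three_conjugates_of_iota (σ : Equiv.Perm ℕ) (hc : σ.IsCycle)
    (n : ℕ) (hfin : {x : ℕ | σ x ≠ x}.Finite) (hcard : {x : ℕ | σ x ≠ x}.ncard = n)
    (hn : 2 ≤ n) :
    ∃ k : ℕ, 0 < k ∧ k ≤ n ∧
      ∃ σ₁ σ₂ σ₃ : Equiv.Perm ℕ,
        IsConj (iotaNat k) σ₁ ∧ IsConj (iotaNat k) σ₂ ∧ IsConj (iotaNat k) σ₃ ∧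
        σ = σ₁ * σ₂ * σ₃ := by
  obtain ⟨g₁, g₂, g₃, h₁, h₂, h₃, hρ⟩ := exists_rotateNat_eq_mul_mul_of_isConj_iotaNat n
  have hρσ : IsConj (rotateNat n) σ := by
    refine isConj_of_isCycle_of_ncard_eq (isCycle_rotateNat hn) hc ?_ hfin ?_ <;>
      rw [setOf_rotateNat_apply_ne hn]
    · exact finite_Iio n
    · rw [ncard_Iio_nat, hcard]
  obtain ⟨c, rfl⟩ := isConj_iff.mp hρσ
  have hconj : ∀ g, IsConj g (c * g * c⁻¹) := fun g => isConj_iff.mpr ⟨c, rfl⟩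
  refine ⟨n - 1, by omega, by omega, c * g₁ * c⁻¹, c * g₂ * c⁻¹, c * g₃ * c⁻¹,
    h₁.trans (hconj g₁), h₂.trans (hconj g₂), h₃.trans (hconj g₃), ?_⟩
  rw [hρ]
  group
end
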